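/- Let Γ be the presented group with generators g, h, f and relations h g h⁻¹ = g⁻¹, h f h⁻¹ = f⁻¹, and g f = f g. Let k, l, m be integers and set ξ = g^k · h^{2l+1} · f^m. Then the centralizer of ξ in Γ equals the subgroup of Γ generated by the set {ξ, h²}. -/

import Mathlib

/-- The relator set of the presented group
`Γ = ⟨g, h, f | h g h⁻¹ = g⁻¹, h f h⁻¹ = f⁻¹, g f = f g⟩`,
the fundamental group of the spherical tangent bundle of the Klein bottle.
Generator `0` is `g`, generator `1` is `h`, generator `2` is `f`. -/
def kleinSTRels : Set (FreeGroup (Fin 3)) :=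
  { FreeGroup.of 1 * FreeGroup.of 0 * (FreeGroup.of 1)⁻¹ * FreeGroup.of 0,
    FreeGroup.of 1 * FreeGroup.of 2 * (FreeGroup.of 1)⁻¹ * FreeGroup.of 2,
    FreeGroup.of 0 * FreeGroup.of 2 * (FreeGroup.of 0)⁻¹ * (FreeGroup.of 2)⁻¹ }

/-- The presented group `⟨g, h, f | h g h⁻¹ = g⁻¹, h f h⁻¹ = f⁻¹, g f = f g⟩`. -/
abbrev KleinST : Type := PresentedGroup kleinSTRels

def KleinST.g : KleinST := PresentedGroup.of 0
def KleinST.h : KleinST := PresentedGroup.of 1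
def KleinST.f : KleinST := PresentedGroup.of 2

/-!
Γ is the semidirect product `ℤ² ⋊ ℤ` in which `c ∈ ℤ` acts by `(-1) ^ c`: sending
`g, f, h` to `(1, 0, 0), (0, 1, 0), (0, 0, 1)` defines a homomorphism to it, and
`(a, b, c) ↦ g ^ a f ^ b h ^ c` is a homomorphism back (by the relations) whose composite with
the first is the identity of Γ. In the model, for `c` odd, `(a, b, d)` commutes with `(k, m, c)`
iff `2 (a, b) = (1 - (-1) ^ d) (k, m)`, i.e. iff it is `(0, 0, 2) ^ t` (`d = 2t`) or
`(k, m, c) (0, 0, 2) ^ t`.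
-/

namespace SemiconjBy

variable {G : Type*} [Group G] {x y : G}

theorem zpow_left_of_inv (h : SemiconjBy y x x⁻¹) (c : ℤ) :
    SemiconjBy (y ^ c) x (x ^ (c.negOnePow : ℤ)) := by
  induction c using Int.induction_on with
  | zero => simp
  | succ n ih =>
    rw [zpow_add_one, Int.negOnePow_succ, Units.val_neg, zpow_neg]
    exact ih.inv_right.mul_left h
  | pred n ih =>
    have h' : SemiconjBy y⁻¹ x x⁻¹ := by simpa using h.inv_right.inv_symm_left
    rw [zpow_sub_one, Int.negOnePow_sub, Int.negOnePow_one, mul_neg_one, Units.val_neg,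
      zpow_neg x]
    exact ih.inv_right.mul_left h'

theorem zpow_zpow_of_inv (h : SemiconjBy y x x⁻¹) (c a : ℤ) :
    SemiconjBy (y ^ c) (x ^ a) (x ^ ((c.negOnePow : ℤ) * a)) := by
  rw [zpow_mul]
  exact (h.zpow_left_of_inv c).zpow_right a

end SemiconjBy

/-- `⟨a, b, c⟩` stands for `g ^ a * f ^ b * h ^ c`. -/
@[ext] structure KleinModel where
  a : ℤ
  b : ℤ
  c : ℤ

namespace KleinModel

instance : Mul KleinModel :=
  ⟨fun x y => ⟨x.a + x.c.negOnePow * y.a, x.b + x.c.negOnePow * y.b, x.c + y.c⟩⟩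
instance : One KleinModel := ⟨⟨0, 0, 0⟩⟩
instance : Inv KleinModel :=
  ⟨fun x => ⟨-(x.c.negOnePow * x.a), -(x.c.negOnePow * x.b), -x.c⟩⟩

@[simp] lemma mul_def (x y : KleinModel) :
    x * y = ⟨x.a + x.c.negOnePow * y.a, x.b + x.c.negOnePow * y.b, x.c + y.c⟩ := rfl
@[simp] lemma one_def : (1 : KleinModel) = ⟨0, 0, 0⟩ := rfl
@[simp] lemma inv_def (x : KleinModel) :
    x⁻¹ = ⟨-(x.c.negOnePow * x.a), -(x.c.negOnePow * x.b), -x.c⟩ := rfl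

instance : Group KleinModel where
  mul_assoc x y z := by ext <;> simp [Int.negOnePow_add] <;> ring
  one_mul x := by ext <;> simp
  mul_one x := by ext <;> simp
  inv_mul_cancel x := by ext <;> simp

lemma mk_zpow_of_c_eq_zero (a b n : ℤ) :
    (⟨a, b, 0⟩ : KleinModel) ^ n = ⟨n * a, n * b, 0⟩ := by
  induction n using Int.induction_on with
  | zero => simp
  | succ n ih => ext <;> simp [zpow_add_one, ih] <;> ring
  | pred n ih => ext <;> simp [zpow_sub_one, ih] <;> ring

lemma mk_zero_zero_zpow (c n : ℤ) : (⟨0, 0, c⟩ : KleinModel) ^ n = ⟨0, 0, n * c⟩ := by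
  induction n using Int.induction_on with
  | zero => simp
  | succ n ih => simp [zpow_add_one, ih]; ring
  | pred n ih => simp [zpow_sub_one, ih]; ring

lemma centralizer_singleton_of_odd {k m c : ℤ} (hc : Odd c) :
    Subgroup.centralizer {(⟨k, m, c⟩ : KleinModel)} =
      Subgroup.closure {⟨k, m, c⟩, ⟨0, 0, 2⟩} := by
  set ξ : KleinModel := ⟨k, m, c⟩
  have hξ : ξ ∈ Subgroup.closure {ξ, ⟨0, 0, 2⟩} := Subgroup.subset_closure (by simp)
  have hsq : (⟨0, 0, 2⟩ : KleinModel) ∈ Subgroup.closure {ξ, ⟨0, 0, 2⟩} :=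
    Subgroup.subset_closure (by simp)
  apply le_antisymm
  · rintro ⟨a, b, d⟩ hx
    have hcomm := Subgroup.mem_centralizer_singleton_iff.mp hx
    simp only [ξ, mul_def, mk.injEq, Int.negOnePow_odd c hc, Units.val_neg, Units.val_one,
      neg_one_mul] at hcomm
    obtain ⟨ha, hb, -⟩ := hcomm
    rcases Int.even_or_odd' d with ⟨t, rfl | rfl⟩
    · simp only [Int.negOnePow_even _ (even_two_mul t), Units.val_one, one_mul] at ha hb
      have hx : (⟨a, b, 2 * t⟩ : KleinModel) = ⟨0, 0, 2⟩ ^ t := by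
        rw [mk_zero_zero_zpow]; ext <;> simp <;> linarith
      exact hx ▸ zpow_mem hsq t
    · obtain ⟨u, rfl⟩ := hc
      simp only [Int.negOnePow_odd _ (odd_two_mul_add_one t), Units.val_neg, Units.val_one,
        neg_one_mul] at ha hb
      have hx : (⟨a, b, 2 * t + 1⟩ : KleinModel) = ξ * ⟨0, 0, 2⟩ ^ (t - u) := by
        rw [mk_zero_zero_zpow]; ext <;> simp [ξ] <;> linarith
      exact hx ▸ mul_mem hξ (zpow_mem hsq _)
  · rw [Subgroup.closure_le]
    rintro x (rfl | rfl) <;> refine Subgroup.mem_centralizer_singleton_iff.mpr ?_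
    · rfl
    · ext <;> simp [ξ, Int.negOnePow_odd c hc, Int.negOnePow_even 2 even_two, add_comm]

section lift

variable {G : Type*} [Group G] {x z y : G}

def lift (hx : SemiconjBy y x x⁻¹) (hz : SemiconjBy y z z⁻¹) (hxz : Commute x z) :
    KleinModel →* G where
  toFun p := x ^ p.a * z ^ p.b * y ^ p.c
  map_one' := by simp
  map_mul' p q := by
    simp only [mul_def, zpow_add]
    symm
    calc x ^ p.a * z ^ p.b * y ^ p.c * (x ^ q.a * z ^ q.b * y ^ q.c)
        = x ^ p.a * z ^ p.b * (y ^ p.c * x ^ q.a) * z ^ q.b * y ^ q.c := by group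
      _ = x ^ p.a * (z ^ p.b * x ^ ((p.c.negOnePow : ℤ) * q.a)) * (y ^ p.c * z ^ q.b) *
            y ^ q.c := by
        rw [(hx.zpow_zpow_of_inv _ _).eq]; group
      _ = _ := by
        rw [(hxz.zpow_zpow _ _).symm.eq, (hz.zpow_zpow_of_inv _ _).eq]; group

end lift

end KleinModel

namespace KleinST

lemma semiconjBy_h_g : SemiconjBy h g g⁻¹ := by
  have hrel : h * g * h⁻¹ * g = 1 := PresentedGroup.one_of_mem (by simp [kleinSTRels])
  exact mul_inv_eq_iff_eq_mul.mp (eq_inv_of_mul_eq_one_left hrel)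

lemma semiconjBy_h_f : SemiconjBy h f f⁻¹ := by
  have hrel : h * f * h⁻¹ * f = 1 := PresentedGroup.one_of_mem (by simp [kleinSTRels])
  exact mul_inv_eq_iff_eq_mul.mp (eq_inv_of_mul_eq_one_left hrel)

lemma commute_g_f : Commute g f := by
  have hrel : g * f * g⁻¹ * f⁻¹ = 1 := PresentedGroup.one_of_mem (by simp [kleinSTRels])
  exact mul_inv_eq_iff_eq_mul.mp (mul_inv_eq_one.mp hrel)

lemma relators_map_to_model : ∀ r ∈ kleinSTRels,
    FreeGroup.lift ![(⟨1, 0, 0⟩ : KleinModel), ⟨0, 0, 1⟩, ⟨0, 1, 0⟩] r = 1 := by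
  rintro r (rfl | rfl | rfl) <;> ext <;> simp

def toModel : KleinST →* KleinModel := PresentedGroup.toGroup relators_map_to_model

@[simp] lemma toModel_g : toModel g = ⟨1, 0, 0⟩ := PresentedGroup.toGroup.of _
@[simp] lemma toModel_h : toModel h = ⟨0, 0, 1⟩ := PresentedGroup.toGroup.of _
@[simp] lemma toModel_f : toModel f = ⟨0, 1, 0⟩ := PresentedGroup.toGroup.of _

def ofModel : KleinModel →* KleinST := KleinModel.lift semiconjBy_h_g semiconjBy_h_f commute_g_f

lemma ofModel_comp_toModel : ofModel.comp toModel = MonoidHom.id KleinST := by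
  refine PresentedGroup.ext fun i => ?_
  fin_cases i <;> simp [ofModel, KleinModel.lift, toModel, g, h, f]

lemma toModel_injective : Function.Injective toModel :=
  Function.LeftInverse.injective (g := ofModel) (DFunLike.congr_fun ofModel_comp_toModel)

end KleinST

namespace Subgroup

variable {G H : Type*} [Group G] [Group H] {φ : G →* H}

lemma centralizer_eq_comap_of_injective (hφ : Function.Injective φ) (s : Set G) :
    centralizer s = comap φ (centralizer (φ '' s)) := by
  ext x
  simp only [mem_comap, mem_centralizer_iff, Set.forall_mem_image, ← map_mul, hφ.eq_iff]

lemma closure_eq_comap_of_injective (hφ : Function.Injective φ) (s : Set G) :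
    closure s = comap φ (closure (φ '' s)) := by
  rw [← MonoidHom.map_closure, comap_map_eq_self_of_injective hφ]

end Subgroup

/-- In `Γ = ⟨g, h, f | h g h⁻¹ = g⁻¹, h f h⁻¹ = f⁻¹, g f = f g⟩`, for integers `k, l, m`
and `ξ = g ^ k * h ^ (2l+1) * f ^ m`, the centralizer of `ξ` is the subgroup generated
by `{ξ, h ^ 2}`. -/
theorem kleinST_centralizer_orientation_reversing (k l m : ℤ) :
    Subgroup.centralizer {KleinST.g ^ k * KleinST.h ^ (2 * l + 1) * KleinST.f ^ m} =
      Subgroup.closure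
        {KleinST.g ^ k * KleinST.h ^ (2 * l + 1) * KleinST.f ^ m, KleinST.h ^ 2} := by
  have hξ : KleinST.toModel (KleinST.g ^ k * KleinST.h ^ (2 * l + 1) * KleinST.f ^ m) =
      ⟨k, -m, 2 * l + 1⟩ := by
    simp [KleinModel.mk_zpow_of_c_eq_zero, KleinModel.mk_zero_zero_zpow,
      Int.negOnePow_two_mul_add_one]
  have hsq : KleinST.toModel (KleinST.h ^ 2) = ⟨0, 0, 2⟩ := by
    simpa using KleinModel.mk_zero_zero_zpow 1 2
  rw [Subgroup.centralizer_eq_comap_of_injective KleinST.toModel_injective,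
    Subgroup.closure_eq_comap_of_injective KleinST.toModel_injective, Set.image_singleton,
    Set.image_pair, hξ, hsq,
    KleinModel.centralizer_singleton_of_odd (odd_two_mul_add_one l)]
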